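/- (Cheeger constant as ℓ¹-Rayleigh quotient) Let (X,Q,π) be a finite Markov chain and let h ≥ 0 be such that for every subset W ⊆ X with Σ_{x ∈ W} π(x) ≤ 1/2 one has Σ_{x ∈ W, y ∉ W} Q(x,y)π(x) ≥ h · Σ_{x ∈ W} π(x) (i.e. h is a lower bound for the Cheeger constant h(X) = inf_{π(W) ≤ 1/2} |∂W|/π(W)). Then every f : X → ℝ with Σ_x f(x)π(x) = 0 satisfies ½ Σ_{x,y} |f(y) − f(x)| Q(x,y)π(x) ≥ (h/2) Σ_x |f(x)| π(x), i.e. ‖∇f‖₁ ≥ (h(X)/2) ‖f‖₁. -/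

import Mathlib

/-!
For `g ≥ 0` the layer-cake formula writes `∑ g π` and `∑∑ |g y - g x| Q π` as integrals over
`t ≥ 0` of `π({g > t})` and of the gradient of the indicator of `{g > t}`, which by
reversibility is `2 |∂{g > t}|`. If `π({g > 0}) ≤ 1/2`, the Cheeger bound applies to every level
set, so `h ∑ g π ≤ ‖∇g‖₁`. For mean-zero `f`, one of `{f > 0}`, `{f < 0}` has mass `≤ 1/2`, say the
first; apply this to `g = f⁺`: mean zero gives `∑ f⁺ π = ‖f‖₁ / 2`, and `‖∇f⁺‖₁ ≤ ‖∇f‖₁` since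
`max · 0` is 1-Lipschitz.
-/

open Finset MeasureTheory

section LayerCake

lemma antitone_ite_lt (c : ℝ) : Antitone fun t : ℝ => if t < c then (1 : ℝ) else 0 := by
  intro a b hab
  by_cases hb : b < c
  · simp [hb, hab.trans_lt hb]
  · by_cases ha : a < c <;> simp [ha, hb]

lemma intervalIntegrable_ite_lt (c a b : ℝ) :
    IntervalIntegrable (fun t : ℝ => if t < c then (1 : ℝ) else 0) volume a b :=
  (antitone_ite_lt c).intervalIntegrable

lemma integral_ite_lt {c M : ℝ} (hc : 0 ≤ c) (hcM : c ≤ M) :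
    ∫ t in (0 : ℝ)..M, (if t < c then (1 : ℝ) else 0) = c := by
  have hind : (fun t : ℝ => if t < c then (1 : ℝ) else 0) = (Set.Iio c).indicator 1 := by
    ext t
    simp [Set.indicator_apply]
  have hinter : Set.Iio c ∩ Set.Ioc 0 M = Set.Ioo 0 c := by
    ext t
    simp only [Set.mem_inter_iff, Set.mem_Iio, Set.mem_Ioc, Set.mem_Ioo]
    grind
  rw [hind, intervalIntegral.integral_of_le (hc.trans hcM),
    integral_indicator_one measurableSet_Iio, measureReal_restrict_apply measurableSet_Iio, hinter]
  simp [hc]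

lemma abs_ite_lt_sub_ite_lt (a b t : ℝ) :
    |(if t < b then (1 : ℝ) else 0) - (if t < a then 1 else 0)|
      = (if t < max a b then (1 : ℝ) else 0) - (if t < min a b then 1 else 0) := by
  by_cases ha : t < a <;> by_cases hb : t < b <;> simp [ha, hb]

lemma intervalIntegrable_abs_ite_lt_sub_ite_lt (a b c d : ℝ) :
    IntervalIntegrable
      (fun t : ℝ => |(if t < b then (1 : ℝ) else 0) - (if t < a then 1 else 0)|) volume c d := by
  simp_rw [abs_ite_lt_sub_ite_lt]
  exact (intervalIntegrable_ite_lt _ _ _).sub (intervalIntegrable_ite_lt _ _ _)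

lemma integral_abs_ite_lt_sub_ite_lt {a b M : ℝ} (ha : 0 ≤ a) (hb : 0 ≤ b) (haM : a ≤ M)
    (hbM : b ≤ M) :
    ∫ t in (0 : ℝ)..M, |(if t < b then (1 : ℝ) else 0) - (if t < a then 1 else 0)| = |b - a| := by
  simp_rw [abs_ite_lt_sub_ite_lt]
  rw [intervalIntegral.integral_sub (intervalIntegrable_ite_lt _ _ _)
      (intervalIntegrable_ite_lt _ _ _),
    integral_ite_lt (ha.trans (le_max_left a b)) (max_le haM hbM),
    integral_ite_lt (le_min ha hb) ((min_le_left a b).trans haM), max_sub_min_eq_abs]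

variable {ι : Type*} (s : Finset ι) {F : ι → ℝ → ℝ} (c : ι → ℝ) {a b : ℝ}

lemma intervalIntegrable_sum_mul_const (hF : ∀ i ∈ s, IntervalIntegrable (F i) volume a b) :
    IntervalIntegrable (fun t => ∑ i ∈ s, F i t * c i) volume a b := by
  simpa only [Finset.sum_fn] using IntervalIntegrable.sum s fun i hi => (hF i hi).mul_const (c i)

lemma integral_sum_mul_const (hF : ∀ i ∈ s, IntervalIntegrable (F i) volume a b) :
    ∫ t in a..b, ∑ i ∈ s, F i t * c i = ∑ i ∈ s, (∫ t in a..b, F i t) * c i := by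
  rw [intervalIntegral.integral_finsetSum fun i hi => (hF i hi).mul_const (c i)]
  simp only [intervalIntegral.integral_mul_const]

end LayerCake

section Reversible

variable {X : Type*} [Fintype X] [DecidableEq X] {Q : X → X → ℝ} {pr : X → ℝ}

lemma sum_compl_sum_eq_of_reversible (hrev : ∀ x y, pr x * Q x y = pr y * Q y x) (W : Finset X) :
    ∑ x ∈ Wᶜ, ∑ y ∈ W, Q x y * pr x = ∑ x ∈ W, ∑ y ∈ Wᶜ, Q x y * pr x := by
  rw [sum_comm]
  exact sum_congr rfl fun y _ => sum_congr rfl fun x _ => by linarith [hrev x y]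

lemma sum_sum_abs_indicator_sub_eq (hrev : ∀ x y, pr x * Q x y = pr y * Q y x)
    (W : Finset X) :
    ∑ x, ∑ y, |(if y ∈ W then (1 : ℝ) else 0) - (if x ∈ W then 1 else 0)| * (Q x y * pr x)
      = 2 * ∑ x ∈ W, ∑ y ∈ Wᶜ, Q x y * pr x := by
  have hterm : ∀ x y,
      |(if y ∈ W then (1 : ℝ) else 0) - (if x ∈ W then 1 else 0)| * (Q x y * pr x)
        = (if x ∈ W then (if y ∈ Wᶜ then Q x y * pr x else 0) else 0)
          + (if x ∈ Wᶜ then (if y ∈ W then Q x y * pr x else 0) else 0) := by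
    intro x y
    by_cases hx : x ∈ W <;> by_cases hy : y ∈ W <;> simp [hx, hy]
  simp only [hterm, sum_add_distrib, sum_ite_irrel, sum_const_zero, sum_ite_mem, univ_inter,
    sum_compl_sum_eq_of_reversible hrev]
  ring

end Reversible

section Cheeger

variable {X : Type*} [Fintype X] [DecidableEq X] {Q : X → X → ℝ} {pr : X → ℝ} {h : ℝ}

lemma cheeger_level_set (hpr : ∀ x, 0 ≤ pr x) (hrev : ∀ x y, pr x * Q x y = pr y * Q y x)
    (hcheeger : ∀ W : Finset X, ∑ x ∈ W, pr x ≤ 1/2 →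
      h * ∑ x ∈ W, pr x ≤ ∑ x ∈ W, ∑ y ∈ Wᶜ, Q x y * pr x)
    {g : X → ℝ} (hsupp : ∑ x with 0 < g x, pr x ≤ 1/2) {t : ℝ} (ht : 0 ≤ t) :
    h * ∑ x, (if t < g x then (1 : ℝ) else 0) * pr x
      ≤ (1/2) * ∑ x, ∑ y,
          |(if t < g y then (1 : ℝ) else 0) - (if t < g x then 1 else 0)| * (Q x y * pr x) := by
  set W : Finset X := {x | t < g x}
  have hmem : ∀ x, x ∈ W ↔ t < g x := by simp [W]
  have hW : ∑ x ∈ W, pr x ≤ 1/2 :=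
    le_trans (sum_le_sum_of_subset_of_nonneg (monotone_filter_right _ fun _ _ => ht.trans_lt)
      fun x _ _ => hpr x) hsupp
  have hgrad := sum_sum_abs_indicator_sub_eq hrev W
  simp only [hmem] at hgrad
  rw [hgrad]
  simp only [boole_mul, ← sum_filter]
  linarith [hcheeger W hW]

lemma cheeger_of_nonneg (hpr : ∀ x, 0 ≤ pr x) (hrev : ∀ x y, pr x * Q x y = pr y * Q y x)
    (hcheeger : ∀ W : Finset X, ∑ x ∈ W, pr x ≤ 1/2 →
      h * ∑ x ∈ W, pr x ≤ ∑ x ∈ W, ∑ y ∈ Wᶜ, Q x y * pr x)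
    {g : X → ℝ} (hg : ∀ x, 0 ≤ g x) (hsupp : ∑ x with 0 < g x, pr x ≤ 1/2) :
    h * ∑ x, g x * pr x ≤ (1/2) * ∑ x, ∑ y, |g y - g x| * (Q x y * pr x) := by
  set M := ∑ x, g x
  have hgM : ∀ x, g x ≤ M := fun x => single_le_sum (fun i _ => hg i) (mem_univ x)
  have hmass : ∫ t in (0 : ℝ)..M, ∑ x, (if t < g x then (1 : ℝ) else 0) * pr x
      = ∑ x, g x * pr x := by
    rw [integral_sum_mul_const _ _ fun x _ => intervalIntegrable_ite_lt _ _ _]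
    exact sum_congr rfl fun x _ => by rw [integral_ite_lt (hg x) (hgM x)]
  have hgrad : ∫ t in (0 : ℝ)..M, ∑ p : X × X,
        |(if t < g p.2 then (1 : ℝ) else 0) - (if t < g p.1 then 1 else 0)| * (Q p.1 p.2 * pr p.1)
      = ∑ p : X × X, |g p.2 - g p.1| * (Q p.1 p.2 * pr p.1) := by
    rw [integral_sum_mul_const _ _ fun p _ => intervalIntegrable_abs_ite_lt_sub_ite_lt _ _ _ _]
    exact sum_congr rfl fun p _ => by
      rw [integral_abs_ite_lt_sub_ite_lt (hg _) (hg _) (hgM _) (hgM _)]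
  rw [← Fintype.sum_prod_type', ← hmass, ← hgrad, ← intervalIntegral.integral_const_mul,
    ← intervalIntegral.integral_const_mul]
  refine intervalIntegral.integral_mono_on (sum_nonneg fun x _ => hg x)
    ((intervalIntegrable_sum_mul_const _ _ fun x _ => intervalIntegrable_ite_lt _ _ _).const_mul h)
    ((intervalIntegrable_sum_mul_const _ _
      fun p _ => intervalIntegrable_abs_ite_lt_sub_ite_lt _ _ _ _).const_mul _)
    fun t ht => ?_
  have hlevel := cheeger_level_set hpr hrev hcheeger hsupp ht.1
  rwa [← Fintype.sum_prod_type'] at hlevel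

lemma cheeger_of_mass_pos_le_half (hQ : ∀ x y, 0 ≤ Q x y) (hpr : ∀ x, 0 ≤ pr x)
    (hrev : ∀ x y, pr x * Q x y = pr y * Q y x)
    (hcheeger : ∀ W : Finset X, ∑ x ∈ W, pr x ≤ 1/2 →
      h * ∑ x ∈ W, pr x ≤ ∑ x ∈ W, ∑ y ∈ Wᶜ, Q x y * pr x)
    {f : X → ℝ} (hf : ∑ x, f x * pr x = 0) (hpos : ∑ x with 0 < f x, pr x ≤ 1/2) :
    (h / 2) * ∑ x, |f x| * pr x ≤ (1/2) * ∑ x, ∑ y, |f y - f x| * Q x y * pr x := by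
  have hsupp : ∑ x with 0 < max (f x) 0, pr x ≤ 1/2 := by
    simpa only [lt_max_iff, lt_irrefl, or_false]
  have hcore := cheeger_of_nonneg hpr hrev hcheeger (fun x => le_max_right (f x) 0) hsupp
  have hmass : ∑ x, max (f x) 0 * pr x = (1/2) * ∑ x, |f x| * pr x := by
    have habs : ∀ x, |f x| * pr x = 2 * (max (f x) 0 * pr x) - f x * pr x := fun x => by
      rcases le_total (f x) 0 with hx | hx
      · rw [abs_of_nonpos hx, max_eq_right hx]; ring
      · rw [abs_of_nonneg hx, max_eq_left hx]; ring
    simp only [habs, sum_sub_distrib, ← mul_sum, hf]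
    ring
  have hgrad : ∑ x, ∑ y, |max (f y) 0 - max (f x) 0| * (Q x y * pr x)
      ≤ ∑ x, ∑ y, |f y - f x| * Q x y * pr x := by
    refine sum_le_sum fun x _ => sum_le_sum fun y _ => ?_
    rw [mul_assoc]
    exact mul_le_mul_of_nonneg_right (abs_max_sub_max_le_abs _ _ _)
      (mul_nonneg (hQ x y) (hpr x))
  rw [hmass] at hcore
  linarith

lemma mass_pos_le_half_or_mass_neg_le_half (hpr : ∀ x, 0 ≤ pr x) (hprsum : ∑ x, pr x = 1)
    (f : X → ℝ) :
    ∑ x with 0 < f x, pr x ≤ 1/2 ∨ ∑ x with 0 < -f x, pr x ≤ 1/2 := by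
  set P : Finset X := {x | 0 < f x}
  set N : Finset X := {x | 0 < -f x}
  have hdisj : Disjoint P N := disjoint_filter.2 fun x _ hpos hneg => by linarith
  have htotal : ∑ x ∈ P ∪ N, pr x ≤ 1 := hprsum ▸ sum_le_univ_sum_of_nonneg hpr
  rw [sum_union hdisj] at htotal
  by_contra! hbig
  linarith [hbig.1, hbig.2]

end Cheeger

theorem cheeger_l1_rayleigh
    {X : Type*} [Fintype X] [DecidableEq X]
    (Q : X → X → ℝ) (pr : X → ℝ)
    (hQ : ∀ x y, 0 ≤ Q x y)
    (hpr : ∀ x, 0 < pr x) (hprsum : ∑ x, pr x = 1)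
    (hrev : ∀ x y, pr x * Q x y = pr y * Q y x)
    (h : ℝ)
    (hcheeger : ∀ W : Finset X, ∑ x ∈ W, pr x ≤ 1/2 →
      h * ∑ x ∈ W, pr x ≤ ∑ x ∈ W, ∑ y ∈ Wᶜ, Q x y * pr x) :
    ∀ f : X → ℝ, (∑ x, f x * pr x) = 0 →
      (h / 2) * ∑ x, |f x| * pr x
        ≤ (1/2) * ∑ x, ∑ y, |f y - f x| * Q x y * pr x := by
  intro f hf
  have hpr' : ∀ x, 0 ≤ pr x := fun x => (hpr x).le
  rcases mass_pos_le_half_or_mass_neg_le_half hpr' hprsum f with hpos | hneg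
  · exact cheeger_of_mass_pos_le_half hQ hpr' hrev hcheeger hf hpos
  · have hf' : ∑ x, -f x * pr x = 0 := by simp [neg_mul, sum_neg_distrib, hf]
    simpa only [abs_neg, ← neg_sub', neg_mul]
      using cheeger_of_mass_pos_le_half hQ hpr' hrev hcheeger hf' hneg
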